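/- arXiv:1908.07118 — 5 statements merged into one kernel-verified Lean document; each statement's English description precedes it below -/
import Mathlib

section
/- Let l₁(x) = ⟨n₁, x⟩ + c₁ and l₂(x) = ⟨n₂, x⟩ + c₂ be affine functions on ℝ^d whose normal vectors n₁, n₂ are linearly independent (so the hyperplanes H₁ = {l₁ = 0} and H₂ = {l₂ = 0} are distinct and non-parallel), and let η ∈ ℝ^d satisfy l₁(η) > 0 and l₂(η) > 0. Then there exist points ζ₁ ∈ H₁ and ζ₂ ∈ H₂ with ζ₁ ≠ ζ₂ such that η lies on the closed segment I joining ζ₁ to ζ₂, and I = {x ∈ L : l₁(x) ≥ 0 and l₂(x) ≥ 0}, where L is the affine line through ζ₁ and ζ₂. -/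
/-!
Since the Gram matrix of `n₁, n₂` is invertible, there is a direction `v` with `⟪n₁, v⟫ = -1`
and `⟪n₂, v⟫ = 1`. Along the line `t ↦ η + t • v` the two affine functions are `l₁ η - t` and
`l₂ η + t`, so `ζ₁ = η + l₁ η • v` and `ζ₂ = η - l₂ η • v` lie on `H₁` and `H₂` with `η` between
them. On the line `lineMap ζ₁ ζ₂ r` one has `l₁ = r * l₁ ζ₂` and `l₂ = (1 - r) * l₂ ζ₁`, so the
two sign conditions cut out exactly `r ∈ [0, 1]`.
-/

open scoped InnerProductSpace RealInnerProductSpace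

open AffineMap

theorem exists_inner_eq_of_linearIndependent {𝕜 E ι : Type*} [RCLike 𝕜] [NormedAddCommGroup E]
    [InnerProductSpace 𝕜 E] [Fintype ι] [DecidableEq ι] {v : ι → E}
    (hv : LinearIndependent 𝕜 v) (y : ι → 𝕜) : ∃ x : E, ∀ i, ⟪v i, x⟫_𝕜 = y i := by
  have hG : IsUnit (Matrix.gram 𝕜 v) := (Matrix.isUnit_iff_isUnit_det _).2 <|
    isUnit_iff_ne_zero.2 (Matrix.det_gram_ne_zero_iff_linearIndependent.2 hv)
  obtain ⟨a, ha⟩ := Matrix.mulVec_surjective_iff_isUnit.2 hG y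
  refine ⟨∑ j, a j • v j, fun i => ?_⟩
  rw [← ha]
  simp [inner_sum, inner_smul_right, Matrix.mulVec, dotProduct, mul_comm]

theorem exists_affineMap_coe_eq_inner_add {E : Type*} [NormedAddCommGroup E]
    [InnerProductSpace ℝ E] {n : E} {c : ℝ} {l : E → ℝ} (hl : ∀ x, l x = ⟪n, x⟫ + c) :
    ∃ f : E →ᵃ[ℝ] ℝ, ⇑f = l ∧ f.linear = innerₛₗ ℝ n :=
  ⟨⟨l, innerₛₗ ℝ n, fun p v => by
    simp only [hl, innerₛₗ_apply_apply, inner_add_right, vadd_eq_add]; ring⟩, rfl, rfl⟩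

section OrderedField

variable {𝕜 E : Type*} [Field 𝕜] [LinearOrder 𝕜] [IsStrictOrderedRing 𝕜] [AddCommGroup E]
  [Module 𝕜 E]

theorem segment_eq_setOf_mem_affineSpan_pair_nonneg (f g : E →ᵃ[𝕜] 𝕜) {p q : E}
    (hfp : f p = 0) (hgq : g q = 0) (hfq : 0 < f q) (hgp : 0 < g p) :
    segment 𝕜 p q = {x | x ∈ line[𝕜, p, q] ∧ 0 ≤ f x ∧ 0 ≤ g x} := by
  ext x
  simp only [segment_eq_image_lineMap, Set.mem_image, Set.mem_ofPred_eq,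
    mem_affineSpan_pair_iff_exists_lineMap_eq]
  constructor
  · rintro ⟨r, ⟨hr₀, hr₁⟩, rfl⟩
    rw [apply_lineMap, hfp, lineMap_apply_ring, apply_lineMap, hgq, lineMap_apply_ring]
    exact ⟨⟨r, rfl⟩, by nlinarith, by nlinarith⟩
  · rintro ⟨⟨r, rfl⟩, hf, hg⟩
    rw [apply_lineMap, hfp, lineMap_apply_ring] at hf
    rw [apply_lineMap, hgq, lineMap_apply_ring] at hg
    exact ⟨r, ⟨by nlinarith, by nlinarith⟩, rfl⟩

theorem exists_mem_segment_of_linear_apply_eq (f g : E →ᵃ[𝕜] 𝕜) {v η : E}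
    (hfv : f.linear v = -1) (hgv : g.linear v = 1) (hfη : 0 < f η) (hgη : 0 < g η) :
    ∃ p q : E, f p = 0 ∧ g q = 0 ∧ 0 < f q ∧ 0 < g p ∧ η ∈ segment 𝕜 p q := by
  set a := f η
  set b := g η
  have hab : a + b ≠ 0 := by positivity
  refine ⟨a • v +ᵥ η, (-b) • v +ᵥ η, ?_, ?_, ?_, ?_, ?_⟩
  · rw [AffineMap.map_vadd, map_smul, hfv, vadd_eq_add]; ring
  · rw [AffineMap.map_vadd, map_smul, hgv, vadd_eq_add]; ring
  · rw [AffineMap.map_vadd, map_smul, hfv, vadd_eq_add]; ring_nf; positivity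
  · rw [AffineMap.map_vadd, map_smul, hgv, vadd_eq_add]; ring_nf; positivity
  rw [segment_eq_image_lineMap]
  refine ⟨a / (a + b), ⟨by positivity, div_le_one_of_le₀ (by linarith) (by positivity)⟩, ?_⟩
  rw [lineMap_apply_module', vadd_eq_add, vadd_eq_add,
    show ∀ t : 𝕜, t • ((-b) • v + η - (a • v + η)) + (a • v + η) = (a - t * (a + b)) • v + η
      from fun t => by module, div_mul_cancel₀ a hab, sub_self, zero_smul, zero_add]

end OrderedField

theorem stmt_0_general (d : ℕ)
    (n₁ n₂ : EuclideanSpace ℝ (Fin d)) (c₁ c₂ : ℝ)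
    (hind : LinearIndependent ℝ ![n₁, n₂])
    (l₁ l₂ : EuclideanSpace ℝ (Fin d) → ℝ)
    (hl₁ : ∀ x, l₁ x = ⟪n₁, x⟫ + c₁) (hl₂ : ∀ x, l₂ x = ⟪n₂, x⟫ + c₂)
    (η : EuclideanSpace ℝ (Fin d)) (hη₁ : 0 < l₁ η) (hη₂ : 0 < l₂ η) :
    ∃ ζ₁ ζ₂ : EuclideanSpace ℝ (Fin d),
      l₁ ζ₁ = 0 ∧ l₂ ζ₂ = 0 ∧ ζ₁ ≠ ζ₂ ∧ η ∈ segment ℝ ζ₁ ζ₂ ∧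
      segment ℝ ζ₁ ζ₂ =
        {x | x ∈ affineSpan ℝ ({ζ₁, ζ₂} : Set (EuclideanSpace ℝ (Fin d))) ∧
          0 ≤ l₁ x ∧ 0 ≤ l₂ x} := by
  obtain ⟨v, hv⟩ := exists_inner_eq_of_linearIndependent hind ![-1, 1]
  obtain ⟨f, rfl, hf⟩ := exists_affineMap_coe_eq_inner_add hl₁
  obtain ⟨g, rfl, hg⟩ := exists_affineMap_coe_eq_inner_add hl₂
  obtain ⟨ζ₁, ζ₂, hf₁, hg₂, hf₂, hg₁, hη⟩ := exists_mem_segment_of_linear_apply_eq f g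
    (v := v) (by simpa [hf] using hv 0) (by simpa [hg] using hv 1) hη₁ hη₂
  exact ⟨ζ₁, ζ₂, hf₁, hg₂, fun h => hf₂.ne' (h ▸ hf₁), hη,
    segment_eq_setOf_mem_affineSpan_pair_nonneg f g hf₁ hg₂ hf₂ hg₁⟩

/-- Lemma 1.2: a segment through η joining the two hyperplanes. -/
theorem stmt_0 (d : ℕ) (hd : 1 ≤ d)
    (n₁ n₂ : EuclideanSpace ℝ (Fin d)) (c₁ c₂ : ℝ)
    (hind : LinearIndependent ℝ ![n₁, n₂])
    (l₁ l₂ : EuclideanSpace ℝ (Fin d) → ℝ)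
    (hl₁ : ∀ x, l₁ x = ⟪n₁, x⟫ + c₁) (hl₂ : ∀ x, l₂ x = ⟪n₂, x⟫ + c₂)
    (η : EuclideanSpace ℝ (Fin d)) (hη₁ : 0 < l₁ η) (hη₂ : 0 < l₂ η) :
    ∃ ζ₁ ζ₂ : EuclideanSpace ℝ (Fin d),
      l₁ ζ₁ = 0 ∧ l₂ ζ₂ = 0 ∧ ζ₁ ≠ ζ₂ ∧ η ∈ segment ℝ ζ₁ ζ₂ ∧
      segment ℝ ζ₁ ζ₂ =
        {x | x ∈ affineSpan ℝ ({ζ₁, ζ₂} : Set (EuclideanSpace ℝ (Fin d))) ∧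
          0 ≤ l₁ x ∧ 0 ≤ l₂ x} :=
  stmt_0_general d n₁ n₂ c₁ c₂ hind l₁ l₂ hl₁ hl₂ η hη₁ hη₂
end

section
/- Assume condition (★) holds for affine functions l₀, …, l_d on ℝ^d and points p₀, …, p_d. Then the convex hull of {p₀, …, p_d} equals the set {x ∈ ℝ^d : l_j(x) ≥ 0 for all j = 0, …, d}. -/
/-!
Each `l_j` is an affine function vanishing at every `p_k` with `k ≠ j` and positive at `p_j`.
Evaluating `l_j` on an affine combination of the `p_k` therefore picks out the `j`-th weight
times `l_j(p_j)`; this forces the `p_k` to be affinely independent, hence (as there are `d + 1`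
of them) an affine basis of `ℝ^d`, and shows `l_j = l_j(p_j) • λ_j` for the barycentric
coordinate `λ_j`. The convex hull of an affine basis is where all barycentric coordinates are
nonnegative, i.e. where all `l_j` are.
-/

open scoped RealInnerProductSpace

section Biorthogonal

variable {k V P ι : Type*} [Field k] [AddCommGroup V] [Module k V] [AddTorsor V P]

theorem AffineMap.apply_affineCombination_of_apply_eq_zero (f : P →ᵃ[k] k) {p : ι → P}
    {i : ι} (hf : ∀ j, j ≠ i → f (p j) = 0) {s : Finset ι} {w : ι → k}
    (hw : ∑ j ∈ s, w j = 1) :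
    f (s.affineCombination k p w) = Set.indicator (↑s) w i * f (p i) := by
  rw [Finset.map_affineCombination _ _ _ hw,
    Finset.affineCombination_eq_linear_combination _ _ _ hw]
  by_cases hi : i ∈ s
  · rw [Finset.sum_eq_single_of_mem i hi fun j _ hj => by simp [hf j hj],
      Set.indicator_of_mem (Finset.mem_coe.2 hi), smul_eq_mul, Function.comp_apply]
  · rw [Set.indicator_of_notMem (Finset.mem_coe.not.2 hi), zero_mul]
    exact Finset.sum_eq_zero fun j hj => by simp [hf j (ne_of_mem_of_not_mem hj hi)]

theorem affineIndependent_of_biorthogonal {p : ι → P} (f : ι → P →ᵃ[k] k)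
    (hzero : ∀ i j, i ≠ j → f i (p j) = 0) (hne : ∀ i, f i (p i) ≠ 0) :
    AffineIndependent k p := by
  rw [affineIndependent_iff_indicator_eq_of_affineCombination_eq]
  intro s₁ s₂ w₁ w₂ hw₁ hw₂ heq
  funext i
  have hfi := congrArg (f i) heq
  rw [(f i).apply_affineCombination_of_apply_eq_zero (fun j hj => hzero i j hj.symm) hw₁,
    (f i).apply_affineCombination_of_apply_eq_zero (fun j hj => hzero i j hj.symm) hw₂] at hfi
  exact mul_right_cancel₀ (hne i) hfi

theorem AffineBasis.apply_eq_coord_mul (b : AffineBasis ι k P) (f : P →ᵃ[k] k) {i : ι}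
    (hf : ∀ j, j ≠ i → f (b j) = 0) (x : P) : f x = b.coord i x * f (b i) := by
  have hext : f = f (b i) • b.coord i := by
    refine AffineMap.ext_on b.tot ?_
    rintro _ ⟨j, rfl⟩
    by_cases hj : j = i
    · simp [hj]
    · simp [hf j hj, b.coord_apply_ne (Ne.symm hj)]
  rw [mul_comm]
  exact congrArg (· x) hext

end Biorthogonal

theorem AffineBasis.convexHull_eq_nonneg_of_biorthogonal {R ι E : Type*} [Field R]
    [LinearOrder R] [IsStrictOrderedRing R] [AddCommGroup E] [Module R E]
    (b : AffineBasis ι R E) (f : ι → E →ᵃ[R] R)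
    (hzero : ∀ i j, i ≠ j → f i (b j) = 0) (hpos : ∀ i, 0 < f i (b i)) :
    convexHull R (Set.range b) = {x | ∀ i, 0 ≤ f i x} := by
  rw [b.convexHull_eq_nonneg_coord]
  ext x
  refine forall_congr' fun i => ?_
  rw [b.apply_eq_coord_mul (f i) (fun j hj => hzero i j hj.symm),
    mul_nonneg_iff_of_pos_right (hpos i)]

theorem stmt_7_general (d : ℕ)
    (n : Fin (d + 1) → EuclideanSpace ℝ (Fin d))
    (c : Fin (d + 1) → ℝ)
    (l : Fin (d + 1) → EuclideanSpace ℝ (Fin d) → ℝ)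
    (hl : ∀ k x, l k x = ⟪n k, x⟫ + c k)
    (p : Fin (d + 1) → EuclideanSpace ℝ (Fin d))
    (hp : ∀ j, {x : EuclideanSpace ℝ (Fin d) | ∀ k, k ≠ j → l k x = 0} = {p j})
    (hpos : ∀ j, 0 < l j (p j)) :
    convexHull ℝ (Set.range p) = {x : EuclideanSpace ℝ (Fin d) | ∀ j, 0 ≤ l j x} := by
  let L : Fin (d + 1) → EuclideanSpace ℝ (Fin d) →ᵃ[ℝ] ℝ := fun k =>
    (innerₛₗ ℝ (n k)).toAffineMap + AffineMap.const ℝ _ (c k)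
  obtain rfl : l = fun k => ⇑(L k) := by
    funext k x
    simp [L, hl]
  have hzero : ∀ k j, k ≠ j → L k (p j) = 0 := fun k j => (hp j).ge rfl k
  have hind : AffineIndependent ℝ p :=
    affineIndependent_of_biorthogonal L hzero fun j => (hpos j).ne'
  have hspan : affineSpan ℝ (Set.range p) = ⊤ :=
    hind.affineSpan_eq_top_iff_card_eq_finrank_add_one.2 (by simp)
  exact (AffineBasis.mk p hind hspan).convexHull_eq_nonneg_of_biorthogonal L hzero hpos

/-- Proposition 3.5: under condition (★), the convex hull of `{p₀, …, p_d}` is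
exactly `{x : l_j(x) ≥ 0 for all j}`. -/
theorem stmt_7 (d : ℕ) (hd : 1 ≤ d)
    (n : Fin (d + 1) → EuclideanSpace ℝ (Fin d)) (hn : ∀ k, n k ≠ 0)
    (c : Fin (d + 1) → ℝ)
    (l : Fin (d + 1) → EuclideanSpace ℝ (Fin d) → ℝ)
    (hl : ∀ k x, l k x = ⟪n k, x⟫ + c k)
    (p : Fin (d + 1) → EuclideanSpace ℝ (Fin d))
    (hdist : ∀ j k, j ≠ k → p j ≠ p k)
    (hp : ∀ j, {x : EuclideanSpace ℝ (Fin d) | ∀ k, k ≠ j → l k x = 0} = {p j})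
    (hpos : ∀ j, 0 < l j (p j)) :
    convexHull ℝ (Set.range p) = {x : EuclideanSpace ℝ (Fin d) | ∀ j, 0 ≤ l j x} :=
  stmt_7_general d n c l hl p hp hpos
end

section
/- Let N ≥ d ≥ 1 and let K = {x ∈ ℝ^d : l_i(x) ≥ 0 for all i ∈ {0, …, N}} be compact with nonempty interior, where each l_i(x) = ⟨n_i, x⟩ + c_i is an affine function whose hyperplane H_i = {l_i = 0} meets K. Suppose every d-element subset of the normal vectors {n₀, …, n_N} is linearly independent. Then there exists a nonempty finite collection 𝒜 of (d+1)-element subsets of {0, …, N} (hence of cardinality at most C(N+1, d+1)) such that for each A ∈ 𝒜 the set S_A := {x ∈ ℝ^d : l_i(x) ≥ 0 for all i ∈ A} is a d-dimensional simplex containing K, and K = ⋂_{A ∈ 𝒜} S_A. -/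
/-!
Since `K` is compact, no nonzero `y` satisfies `⟪n j, y⟫ ≥ 0` for all `j` (the ray from an interior
point in direction `y` would stay in `K`). By Farkas' lemma the normals therefore positively span
the space, so each `-n i` is a nonnegative combination of the normals. Carathéodory's theorem for
cones, together with general position, shrinks this to a positive linear relation among exactly
`d + 1` normals, one of them `n i`. Half-spaces whose `d + 1` normals satisfy a positive relation
cut out a simplex, with the points where `d` of the hyperplanes meet as vertices; it contains `K`.
Every constraint of `K` is used by one of these simplices, so their intersection is `K`.
-/

open Finset Module
open scoped RealInnerProductSpace

theorem PointedCone.mem_hull_range_iff {R M ι : Type*} [Semiring R] [PartialOrder R]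
    [IsOrderedRing R] [AddCommMonoid M] [Module R M] [Fintype ι] {v : ι → M} {x : M} :
    x ∈ hull R (Set.range v) ↔ ∃ w : ι → R, (∀ j, 0 ≤ w j) ∧ ∑ j, w j • v j = x := by
  rw [Submodule.mem_span_range_iff_exists_fun]
  constructor
  · rintro ⟨w, rfl⟩
    exact ⟨fun j => w j, fun j => (w j).2, rfl⟩
  · rintro ⟨w, hw, rfl⟩
    exact ⟨fun j => ⟨w j, hw j⟩, rfl⟩

theorem linearIndepOn_of_card_le {R ι M : Type*} [Semiring R] [AddCommMonoid M] [Module R M]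
    [Fintype ι] {v : ι → M} {d : ℕ} (hd : d ≤ Fintype.card ι)
    (h : ∀ s : Finset ι, s.card = d → LinearIndepOn R v s) {s : Finset ι} (hs : s.card ≤ d) :
    LinearIndepOn R v s := by
  obtain ⟨u, hsu, -, hu⟩ := exists_subsuperset_card_eq (subset_univ s) hs (by simpa using hd)
  exact (h u hu).mono (coe_subset.mpr hsu)

section ConicCaratheodory

variable {𝕜 ι V : Type*} [Field 𝕜] [LinearOrder 𝕜] [IsStrictOrderedRing 𝕜]
  [AddCommGroup V] [Module 𝕜 V] [DecidableEq ι] {v : ι → V}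

theorem exists_erase_sum_smul_eq_of_not_linearIndepOn {s : Finset ι}
    (hs : ¬LinearIndepOn 𝕜 v s) {w : ι → 𝕜} (hw : ∀ j ∈ s, 0 ≤ w j) :
    ∃ k ∈ s, ∃ w' : ι → 𝕜, (∀ j ∈ s.erase k, 0 ≤ w' j) ∧
      ∑ j ∈ s.erase k, w' j • v j = ∑ j ∈ s, w j • v j := by
  obtain ⟨g, hg, hpos⟩ : ∃ g : ι → 𝕜, ∑ j ∈ s, g j • v j = 0 ∧ ∃ j ∈ s, 0 < g j := by
    obtain ⟨g, hg, j, hj, hgj⟩ := not_linearIndepOn_finset_iff.mp hs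
    rcases hgj.lt_or_gt with hneg | hpos
    · exact ⟨-g, by simp [neg_smul, hg], j, hj, by simpa using hneg⟩
    · exact ⟨g, hg, j, hj, hpos⟩
  obtain ⟨k, hk, hmin⟩ := ({j ∈ s | 0 < g j}).exists_min_image (fun j => w j / g j)
    (by simpa [Finset.Nonempty] using hpos)
  rw [mem_filter] at hk
  -- subtract the multiple of the relation `g` that first makes a weight vanish
  refine ⟨k, hk.1, fun j => w j - w k / g k * g j, fun j hj => ?_, ?_⟩
  · have hjs := mem_of_mem_erase hj
    rcases le_or_gt (g j) 0 with hgj | hgj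
    · nlinarith [hw j hjs, div_nonneg (hw k hk.1) hk.2.le]
    · have := hmin j (mem_filter.mpr ⟨hjs, hgj⟩)
      rw [div_le_div_iff₀ hk.2 hgj] at this
      rw [sub_nonneg, div_mul_eq_mul_div, div_le_iff₀ hk.2]
      linarith
  · rw [sum_erase _ (by simp [hk.2.ne']), ← sub_eq_zero]
    simp only [sub_smul, sum_sub_distrib, mul_smul, ← smul_sum, hg, smul_zero, sub_zero,
      sub_self]

theorem exists_linearIndepOn_pos_sum_smul_eq (s : Finset ι) (w : ι → 𝕜)
    (hw : ∀ j ∈ s, 0 ≤ w j) :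
    ∃ t ⊆ s, LinearIndepOn 𝕜 v t ∧ ∃ μ : ι → 𝕜, (∀ j ∈ t, 0 < μ j) ∧
      ∑ j ∈ t, μ j • v j = ∑ j ∈ s, w j • v j := by
  induction s using Finset.strongInduction generalizing w with
  | H s ih =>
  by_cases hzero : ∃ k ∈ s, w k = 0
  · obtain ⟨k, hk, hwk⟩ := hzero
    obtain ⟨t, hts, ht, μ, hμ, hsum⟩ :=
      ih (s.erase k) (erase_ssubset hk) w fun j hj => hw j (mem_of_mem_erase hj)
    refine ⟨t, hts.trans (erase_subset k s), ht, μ, hμ, ?_⟩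
    rw [hsum, sum_erase _ (by simp [hwk])]
  by_cases hs : LinearIndepOn 𝕜 v s
  · push Not at hzero
    exact ⟨s, subset_rfl, hs, w, fun j hj => (hw j hj).lt_of_ne (hzero j hj).symm, rfl⟩
  obtain ⟨k, hk, w', hw', hsum'⟩ := exists_erase_sum_smul_eq_of_not_linearIndepOn hs hw
  obtain ⟨t, hts, ht, μ, hμ, hsum⟩ := ih (s.erase k) (erase_ssubset hk) w' hw'
  exact ⟨t, hts.trans (erase_subset k s), ht, μ, hμ, hsum.trans hsum'⟩

variable [FiniteDimensional 𝕜 V] [Fintype ι]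

theorem exists_pos_relation_of_neg_mem_hull
    (hgen : ∀ s : Finset ι, s.card ≤ finrank 𝕜 V → LinearIndepOn 𝕜 v s) {i : ι}
    (hi : -v i ∈ PointedCone.hull 𝕜 (Set.range v)) :
    ∃ A : Finset ι, i ∈ A ∧ A.card = finrank 𝕜 V + 1 ∧
      ∃ μ : ι → 𝕜, (∀ j ∈ A, 0 < μ j) ∧ ∑ j ∈ A, μ j • v j = 0 := by
  obtain ⟨w, hw, hwv⟩ := PointedCone.mem_hull_range_iff.mp hi
  obtain ⟨t, -, ht, μ, hμ, hsum⟩ :=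
    exists_linearIndepOn_pos_sum_smul_eq (v := v) univ w fun j _ => hw j
  rw [hwv] at hsum
  have hit : i ∉ t := by
    intro hit
    have hrel : ∑ j ∈ t, (μ j + if j = i then 1 else 0) • v j = 0 := by
      simp [add_smul, sum_add_distrib, hsum, ite_smul, hit]
    have := linearIndepOn_finset_iff.mp ht _ hrel i hit
    rw [if_pos rfl] at this
    linarith [hμ i hit]
  obtain ⟨μ', hμ'i, hμ't⟩ : ∃ μ' : ι → 𝕜, μ' i = 1 ∧ ∀ j ∈ t, μ' j = μ j :=
    ⟨Function.update μ i 1, by simp,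
      fun j hj => Function.update_of_ne (ne_of_mem_of_not_mem hj hit) _ _⟩
  have hrel : ∑ j ∈ insert i t, μ' j • v j = 0 := by
    rw [sum_insert hit, hμ'i, one_smul, sum_congr rfl fun j hj => by rw [hμ't j hj], hsum,
      add_neg_cancel]
  have hle : t.card ≤ finrank 𝕜 V := by
    simpa using ht.linearIndependent.fintype_card_le_finrank
  have hgt : finrank 𝕜 V < (insert i t).card := by
    by_contra! h
    simpa [hμ'i] using linearIndepOn_finset_iff.mp (hgen _ h) μ' hrel i (mem_insert_self i t)
  refine ⟨insert i t, mem_insert_self i t, ?_, μ', fun j hj => ?_, hrel⟩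
  · rw [card_insert_of_notMem hit] at hgt ⊢
    omega
  · rcases mem_insert.mp hj with rfl | hj
    · simp [hμ'i]
    · exact hμ't j hj ▸ hμ j hj

end ConicCaratheodory

namespace PointedCone

variable {ι : Type*} [Fintype ι]

/-- By Carathéodory the cone is a finite union of images of orthants under injective linear
maps. -/
theorem isClosed_hull_range {E : Type*} [AddCommGroup E] [Module ℝ E] [TopologicalSpace E]
    [IsTopologicalAddGroup E] [ContinuousSMul ℝ E] [T2Space E] {v : ι → E} :
    IsClosed (hull ℝ (Set.range v) : Set E) := by
  classical
  let T (t : Finset ι) : (t → ℝ) →ₗ[ℝ] E := Fintype.linearCombination ℝ (fun j : t => v j)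
  have hcone : (hull ℝ (Set.range v) : Set E) =
      ⋃ t ∈ {t : Finset ι | LinearIndepOn ℝ v (t : Set ι)}, T t '' Set.Ici 0 := by
    ext x
    simp only [Set.mem_iUnion, Set.mem_image, Set.mem_Ici]
    constructor
    · rintro hx
      obtain ⟨w, hw, rfl⟩ := mem_hull_range_iff.mp hx
      obtain ⟨t, -, ht, μ, hμ, hsum⟩ :=
        exists_linearIndepOn_pos_sum_smul_eq (v := v) univ w fun j _ => hw j
      refine ⟨t, ht, fun j => μ j, fun j => (hμ j j.2).le, ?_⟩
      simp [T, Fintype.linearCombination_apply, ← hsum, sum_attach t (fun j => μ j • v j)]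
    · rintro ⟨t, -, μ, hμ, rfl⟩
      simp only [T, Fintype.linearCombination_apply]
      exact Submodule.sum_mem _ fun j _ => smul_mem _ (hμ j) (subset_hull ⟨j, rfl⟩)
  rw [hcone]
  refine (Set.toFinite _).isClosed_biUnion fun t ht => ?_
  have hinj : LinearMap.ker (T t) = ⊥ := by
    rw [LinearMap.ker_eq_bot']
    exact fun μ hμ => Fintype.linearIndependent_iff.mp ht μ hμ |> funext
  exact (T t).isClosedEmbedding_of_injective hinj |>.isClosedMap _ isClosed_Ici

theorem hull_range_eq_top {E : Type*} [NormedAddCommGroup E] [InnerProductSpace ℝ E]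
    [CompleteSpace E] {v : ι → E} (hv : ∀ y, (∀ j, 0 ≤ ⟪v j, y⟫) → y = 0) :
    hull ℝ (Set.range v) = ⊤ := by
  refine eq_top_iff.mpr fun x _ => ?_
  by_contra hx
  let C : ProperCone ℝ E := ⟨hull ℝ (Set.range v), isClosed_hull_range⟩
  obtain ⟨y, hCy, hxy⟩ := C.hyperplane_separation' (x₀ := x) hx
  rw [hv y fun j => hCy _ (subset_hull ⟨j, rfl⟩), inner_zero_right] at hxy
  exact hxy.false

end PointedCone

def IsSimplex (E : Type*) [AddCommGroup E] [Module ℝ E] (S : Set E) : Prop :=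
  ∃ p : Fin (finrank ℝ E + 1) → E, AffineIndependent ℝ p ∧ S = convexHull ℝ (Set.range p)

section Polyhedron

variable {ι E : Type*} [NormedAddCommGroup E] [InnerProductSpace ℝ E] {v : ι → E}

theorem LinearIndepOn.exists_forall_inner_eq [FiniteDimensional ℝ E] {s : Finset ι}
    (hs : LinearIndepOn ℝ v s) (t : ι → ℝ) : ∃ x : E, ∀ j ∈ s, ⟪v j, x⟫ = t j := by
  obtain ⟨g, hg⟩ :=
    LinearMap.exists_extend ((Basis.span hs.linearIndependent).constr ℝ fun j => t j)
  refine ⟨(InnerProductSpace.toDual ℝ E).symm (LinearMap.toContinuousLinearMap g),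
    fun j hj => ?_⟩
  rw [real_inner_comm, InnerProductSpace.toDual_symm_apply, LinearMap.coe_toContinuousLinearMap']
  have := congr($hg (Basis.span hs.linearIndependent ⟨j, hj⟩))
  rwa [LinearMap.comp_apply, Basis.constr_basis, Submodule.subtype_apply, Basis.span_apply] at this

theorem LinearIndepOn.span_image_eq_top [FiniteDimensional ℝ E] {s : Finset ι}
    (hs : LinearIndepOn ℝ v s) (hcard : s.card = finrank ℝ E) :
    Submodule.span ℝ (v '' s) = ⊤ := by
  rw [Set.image_eq_range]
  exact LinearIndependent.span_eq_top_of_card_eq_finrank' hs (by simpa using hcard)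

theorem eq_of_forall_inner_eq_of_span_eq_top {s : Set ι} (hs : Submodule.span ℝ (v '' s) = ⊤)
    {x y : E} (h : ∀ j ∈ s, ⟪v j, x⟫ = ⟪v j, y⟫) : x = y := by
  have : (⊤ : Submodule ℝ E) ⟂ Submodule.span ℝ {x - y} := by
    rw [← hs, Submodule.isOrtho_span]
    rintro _ ⟨j, hj, rfl⟩ _ rfl
    rw [inner_sub_right, h j hj, sub_self]
  simpa [sub_eq_zero] using Submodule.isOrtho_top_left.mp this

theorem affineIndependent_of_inner_add_eq_zero_iff {c : ι → ℝ} {p : ι → E}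
    (h : ∀ j k, ⟪v j, p k⟫ + c j = 0 ↔ j ≠ k) : AffineIndependent ℝ p := by
  classical
  rw [affineIndependent_iff]
  intro s w hw hwp j hj
  have hsum : ∑ k ∈ s, w k * (⟪v j, p k⟫ + c j) = 0 := by
    simp only [mul_add, sum_add_distrib, ← sum_mul, hw, zero_mul, add_zero,
      ← real_inner_smul_right, ← inner_sum, hwp, inner_zero_right]
  rw [sum_eq_single_of_mem j hj fun k _ hkj => by rw [(h j k).mpr hkj.symm, mul_zero]] at hsum
  exact (mul_eq_zero.mp hsum).resolve_right fun h' => (h j j).mp h' rfl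

theorem convex_setOf_forall_inner_add_nonneg (A : Set ι) (c : ι → ℝ) :
    Convex ℝ {x : E | ∀ j ∈ A, 0 ≤ ⟪v j, x⟫ + c j} := by
  intro x hx y hy a b ha hb hab j hj
  have : ⟪v j, a • x + b • y⟫ + c j = a * (⟪v j, x⟫ + c j) + b * (⟪v j, y⟫ + c j) := by
    rw [inner_add_right, real_inner_smul_right, real_inner_smul_right]
    linear_combination c j * hab.symm
  rw [this]
  have := hx j hj
  have := hy j hj
  positivity

theorem pos_of_mem_interior_setOf_inner_add_nonneg {u : E} (hu : u ≠ 0) {c : ℝ} {x : E}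
    (hx : x ∈ interior {y | 0 ≤ ⟪u, y⟫ + c}) : 0 < ⟪u, x⟫ + c := by
  have hx' : x ∈ {y | 0 ≤ ⟪u, y⟫ + c} := interior_subset hx
  refine lt_of_le_of_ne hx' fun h => hu ?_
  -- otherwise the affine function has a local minimum at `x`, so its gradient `u` vanishes
  have hmin : IsLocalMin (fun y => ⟪u, y⟫ + c) x :=
    Filter.mem_of_superset (mem_interior_iff_mem_nhds.mp hx) fun y hy => by simpa [← h] using hy
  have hderiv : HasFDerivAt (fun y => ⟪u, y⟫ + c) (innerSL ℝ u) x :=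
    (innerSL ℝ u).hasFDerivAt.add_const c
  simpa using congr($(hmin.hasFDerivAt_eq_zero hderiv) u)

theorem eq_zero_of_forall_add_smul_mem {K : Set E} (hK : Bornology.IsBounded K) {x y : E}
    (h : ∀ t : ℝ, 0 ≤ t → x + t • y ∈ K) : y = 0 := by
  obtain ⟨R, hR⟩ := hK.exists_norm_le
  by_contra hy
  have hy' : 0 < ‖y‖ := norm_pos_iff.mpr hy
  have ht : 0 ≤ (R + ‖x‖ + 1) / ‖y‖ := by
    have := (norm_nonneg _).trans (hR _ (h 0 le_rfl))
    positivity
  have h1 : ‖((R + ‖x‖ + 1) / ‖y‖) • y‖ ≤ ‖x + ((R + ‖x‖ + 1) / ‖y‖) • y‖ + ‖x‖ := by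
    simpa using norm_sub_le (x + ((R + ‖x‖ + 1) / ‖y‖) • y) x
  rw [norm_smul, Real.norm_of_nonneg ht, div_mul_cancel₀ _ hy'.ne'] at h1
  linarith [hR _ (h _ ht)]

variable {A : Finset ι} {c μ : ι → ℝ} {σ : ℝ}

theorem sum_mul_inner_add_eq_of_sum_smul_eq_zero (hrel : ∑ j ∈ A, μ j • v j = 0) (x : E) :
    ∑ j ∈ A, μ j * (⟪v j, x⟫ + c j) = ∑ j ∈ A, μ j * c j := by
  simp only [mul_add, sum_add_distrib, ← real_inner_smul_left, ← sum_inner, hrel,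
    inner_zero_left, zero_add]

theorem exists_inner_add_eq_ite [FiniteDimensional ℝ E] [DecidableEq ι]
    (hind : ∀ k ∈ A, LinearIndepOn ℝ v (A.erase k)) (hμ : ∀ j ∈ A, μ j ≠ 0)
    (hconst : ∀ x : E, ∑ j ∈ A, μ j * (⟪v j, x⟫ + c j) = σ) :
    ∃ q : ι → E, ∀ j ∈ A, ∀ k ∈ A, ⟪v j, q k⟫ + c j = if j = k then σ / μ k else 0 := by
  choose! q hq using fun k (hk : k ∈ A) => (hind k hk).exists_forall_inner_eq (fun j => -c j)
  refine ⟨q, fun j hj k hk => ?_⟩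
  split_ifs with hjk
  · subst hjk
    have := hconst (q j)
    rw [sum_eq_single_of_mem j hj fun i hi hij => by
      rw [hq j hj i (mem_erase.mpr ⟨hij, hi⟩), neg_add_cancel, mul_zero]] at this
    rw [← this, mul_div_cancel_left₀ _ (hμ j hj)]
  · rw [hq k hk j (mem_erase.mpr ⟨hjk, hj⟩), neg_add_cancel]

theorem eq_sum_smul_of_inner_add_eq_ite [DecidableEq ι] (hspan : Submodule.span ℝ (v '' A) = ⊤)
    (hμ : ∀ j ∈ A, μ j ≠ 0) (hσ : σ ≠ 0)
    (hconst : ∀ x : E, ∑ j ∈ A, μ j * (⟪v j, x⟫ + c j) = σ) {q : ι → E}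
    (hq : ∀ j ∈ A, ∀ k ∈ A, ⟪v j, q k⟫ + c j = if j = k then σ / μ k else 0) (x : E) :
    x = ∑ k ∈ A, (μ k * (⟪v k, x⟫ + c k) / σ) • q k := by
  have hw1 : ∑ k ∈ A, μ k * (⟪v k, x⟫ + c k) / σ = 1 := by
    rw [← sum_div, hconst, div_self hσ]
  refine eq_of_forall_inner_eq_of_span_eq_top hspan fun j (hj : j ∈ A) => ?_
  suffices ⟪v j, x⟫ + c j = ⟪v j, ∑ k ∈ A, (μ k * (⟪v k, x⟫ + c k) / σ) • q k⟫ + c j by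
    linarith
  calc ⟪v j, x⟫ + c j = ∑ k ∈ A, μ k * (⟪v k, x⟫ + c k) / σ * (⟪v j, q k⟫ + c j) := by
        rw [sum_congr rfl fun k hk => by rw [hq j hj k hk]]
        simp only [mul_ite, mul_zero, sum_ite_eq, if_pos hj]
        field_simp [hμ j hj, hσ]
    _ = ⟪v j, ∑ k ∈ A, (μ k * (⟪v k, x⟫ + c k) / σ) • q k⟫ + c j := by
        rw [sum_congr rfl fun k _ => mul_add _ _ _, sum_add_distrib, ← sum_mul, hw1, one_mul,
          inner_sum]
        simp only [real_inner_smul_right]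

/-- The vertices are the points where all but one of the hyperplanes meet, and `x` has
barycentric coordinates `μ k * (⟪v k, x⟫ + c k) / ∑ j ∈ A, μ j * c j`. -/
theorem isSimplex_setOf_inner_add_nonneg [FiniteDimensional ℝ E] [DecidableEq ι]
    (hA : A.card = finrank ℝ E + 1) (hind : ∀ k ∈ A, LinearIndepOn ℝ v (A.erase k))
    (hμ : ∀ j ∈ A, 0 < μ j) (hrel : ∑ j ∈ A, μ j • v j = 0) {x₀ : E}
    (hx₀ : ∀ j ∈ A, 0 < ⟪v j, x₀⟫ + c j) :
    IsSimplex E {x | ∀ j ∈ A, 0 ≤ ⟪v j, x⟫ + c j} := by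
  have hconst := sum_mul_inner_add_eq_of_sum_smul_eq_zero (c := c) hrel
  obtain ⟨k₀, hk₀⟩ : A.Nonempty := card_pos.mp (by omega)
  have hσ : 0 < ∑ j ∈ A, μ j * c j :=
    hconst x₀ ▸ sum_pos (fun j hj => mul_pos (hμ j hj) (hx₀ j hj)) ⟨k₀, hk₀⟩
  have hμ' j (hj : j ∈ A) := (hμ j hj).ne'
  obtain ⟨q, hq⟩ := exists_inner_add_eq_ite hind hμ' hconst
  have hspan : Submodule.span ℝ (v '' A) = ⊤ := top_unique <|
    ((hind k₀ hk₀).span_image_eq_top (by rw [card_erase_of_mem hk₀, hA]; rfl)).ge.trans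
      (Submodule.span_mono (Set.image_mono (coe_subset.mpr (erase_subset k₀ A))))
  set e := A.equivFinOfCardEq hA
  refine ⟨fun m => q (e.symm m), ?_, ?_⟩
  · refine affineIndependent_of_inner_add_eq_zero_iff (v := fun m => v (e.symm m))
      (c := fun m => c (e.symm m)) fun m m' => ?_
    rw [hq _ (e.symm m).2 _ (e.symm m').2]
    simp [(div_pos hσ (hμ _ (e.symm m').2)).ne']
  have hrange : Set.range (fun m => q (e.symm m)) = q '' A :=
    (e.symm.surjective.range_comp fun k : A => q k).trans (Set.image_eq_range q A).symm
  rw [hrange]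
  refine Set.Subset.antisymm (fun x hx => ?_) (convexHull_min ?_ ?_)
  · rw [eq_sum_smul_of_inner_add_eq_ite hspan hμ' hσ.ne' hconst hq x]
    exact (convex_convexHull ℝ _).sum_mem
      (fun k hk => div_nonneg (mul_nonneg (hμ k hk).le (hx k hk)) hσ.le)
      (by rw [← sum_div, hconst, div_self hσ.ne'])
      fun k hk => subset_convexHull ℝ _ (Set.mem_image_of_mem q hk)
  · rintro _ ⟨k, hk, rfl⟩ j hj
    rw [hq j hj k hk]
    split_ifs
    exacts [(div_pos hσ (hμ k hk)).le, le_rfl]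
  · exact convex_setOf_forall_inner_add_nonneg _ c

theorem exists_mem_isSimplex_setOf_inner_add_nonneg [FiniteDimensional ℝ E] [Fintype ι]
    [DecidableEq ι]
    (hgen : ∀ s : Finset ι, s.card ≤ finrank ℝ E → LinearIndepOn ℝ v s)
    (hK : Bornology.IsBounded {x : E | ∀ j, 0 ≤ ⟪v j, x⟫ + c j}) {x₀ : E}
    (hx₀ : ∀ j, 0 < ⟪v j, x₀⟫ + c j) (i : ι) :
    ∃ A : Finset ι, i ∈ A ∧ A.card = finrank ℝ E + 1 ∧
      IsSimplex E {x | ∀ j ∈ A, 0 ≤ ⟪v j, x⟫ + c j} := by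
  have htop : PointedCone.hull ℝ (Set.range v) = ⊤ := PointedCone.hull_range_eq_top
    fun y hy => eq_zero_of_forall_add_smul_mem (x := x₀) hK fun t ht j => by
      rw [inner_add_right, real_inner_smul_right]
      nlinarith [hx₀ j, hy j]
  obtain ⟨A, hiA, hA, μ, hμ, hrel⟩ :=
    exists_pos_relation_of_neg_mem_hull hgen (htop ▸ Submodule.mem_top (x := -v i))
  exact ⟨A, hiA, hA, isSimplex_setOf_inner_add_nonneg hA
    (fun k hk => hgen _ (by rw [card_erase_of_mem hk, hA]; rfl)) hμ hrel fun j _ => hx₀ j⟩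

end Polyhedron

theorem stmt_10_general (d N : ℕ) (hN : d ≤ N)
    (n : Fin (N + 1) → EuclideanSpace ℝ (Fin d)) (hn : ∀ i, n i ≠ 0)
    (c : Fin (N + 1) → ℝ)
    (l : Fin (N + 1) → EuclideanSpace ℝ (Fin d) → ℝ)
    (hl : ∀ i x, l i x = ⟪n i, x⟫ + c i)
    (K : Set (EuclideanSpace ℝ (Fin d)))
    (hK : K = {x : EuclideanSpace ℝ (Fin d) | ∀ i, 0 ≤ l i x})
    (hKcomp : IsCompact K) (hKint : (interior K).Nonempty)
    (hind : ∀ s : Finset (Fin (N + 1)), s.card = d →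
      LinearIndependent ℝ (fun i : s => n i)) :
    ∃ 𝒜 : Finset (Finset (Fin (N + 1))),
      𝒜.Nonempty ∧
      (∀ A ∈ 𝒜, A.card = d + 1) ∧
      𝒜.card ≤ (N + 1).choose (d + 1) ∧
      (∀ A ∈ 𝒜,
        K ⊆ {x : EuclideanSpace ℝ (Fin d) | ∀ i ∈ A, 0 ≤ l i x} ∧
        ∃ p : Fin (d + 1) → EuclideanSpace ℝ (Fin d),
          AffineIndependent ℝ p ∧
          {x : EuclideanSpace ℝ (Fin d) | ∀ i ∈ A, 0 ≤ l i x} =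
            convexHull ℝ (Set.range p)) ∧
      K = ⋂ A ∈ 𝒜, {x : EuclideanSpace ℝ (Fin d) | ∀ i ∈ A, 0 ≤ l i x} := by
  classical
  obtain rfl : l = fun i x => ⟪n i, x⟫ + c i := funext fun i => funext (hl i)
  subst hK
  beta_reduce at hKcomp hKint ⊢
  have hdim : finrank ℝ (EuclideanSpace ℝ (Fin d)) = d := finrank_euclideanSpace_fin
  obtain ⟨x₀, hx₀⟩ := hKint
  have hsimplex := exists_mem_isSimplex_setOf_inner_add_nonneg
    (fun s hs => linearIndepOn_of_card_le (by simp; omega) hind (hdim ▸ hs))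
    hKcomp.isBounded fun i => pos_of_mem_interior_setOf_inner_add_nonneg (hn i)
      (interior_mono (Set.ofPred_subset_ofPred.mpr fun _ hx => hx i) hx₀)
  unfold IsSimplex at hsimplex
  rw [hdim] at hsimplex
  let 𝒜 := (powersetCard (d + 1) (univ : Finset (Fin (N + 1)))).filter fun A =>
    ∃ p : Fin (d + 1) → EuclideanSpace ℝ (Fin d), AffineIndependent ℝ p ∧
      {x | ∀ j ∈ A, 0 ≤ ⟪n j, x⟫ + c j} = convexHull ℝ (Set.range p)
  have hcover (i : Fin (N + 1)) : ∃ A ∈ 𝒜, i ∈ A := by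
    obtain ⟨A, hiA, hA, hp⟩ := hsimplex i
    exact ⟨A, mem_filter.mpr ⟨mem_powersetCard.mpr ⟨subset_univ A, hA⟩, hp⟩, hiA⟩
  refine ⟨𝒜, (hcover 0).imp fun A h => h.1,
    fun A hA => (mem_powersetCard.mp (mem_filter.mp hA).1).2,
    (card_filter_le _ _).trans (by simp [card_powersetCard]),
    fun A hA => ⟨fun x hx i _ => hx i, (mem_filter.mp hA).2⟩,
    Set.Subset.antisymm (Set.subset_iInter₂ fun A _ x hx i _ => hx i) fun x hx i => ?_⟩
  obtain ⟨A, hA, hiA⟩ := hcover i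
  exact Set.mem_iInter₂.mp hx A hA i hiA

/-- Theorem 3.8: a compact convex polytope whose face normals are in general
position is the intersection of at most `C(N+1, d+1)` supporting `d`-dimensional
simplices, each cut out by `d+1` of the defining affine functions. -/
theorem stmt_10 (d N : ℕ) (hd : 1 ≤ d) (hN : d ≤ N)
    (n : Fin (N + 1) → EuclideanSpace ℝ (Fin d)) (hn : ∀ i, n i ≠ 0)
    (c : Fin (N + 1) → ℝ)
    (l : Fin (N + 1) → EuclideanSpace ℝ (Fin d) → ℝ)
    (hl : ∀ i x, l i x = ⟪n i, x⟫ + c i)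
    (K : Set (EuclideanSpace ℝ (Fin d)))
    (hK : K = {x : EuclideanSpace ℝ (Fin d) | ∀ i, 0 ≤ l i x})
    (hKcomp : IsCompact K) (hKint : (interior K).Nonempty)
    (hmeet : ∀ i, ∃ x ∈ K, l i x = 0)
    (hind : ∀ s : Finset (Fin (N + 1)), s.card = d →
      LinearIndependent ℝ (fun i : s => n i)) :
    ∃ 𝒜 : Finset (Finset (Fin (N + 1))),
      𝒜.Nonempty ∧
      (∀ A ∈ 𝒜, A.card = d + 1) ∧
      𝒜.card ≤ (N + 1).choose (d + 1) ∧
      (∀ A ∈ 𝒜,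
        K ⊆ {x : EuclideanSpace ℝ (Fin d) | ∀ i ∈ A, 0 ≤ l i x} ∧
        ∃ p : Fin (d + 1) → EuclideanSpace ℝ (Fin d),
          AffineIndependent ℝ p ∧
          {x : EuclideanSpace ℝ (Fin d) | ∀ i ∈ A, 0 ≤ l i x} =
            convexHull ℝ (Set.range p)) ∧
      K = ⋂ A ∈ 𝒜, {x : EuclideanSpace ℝ (Fin d) | ∀ i ∈ A, 0 ≤ l i x} :=
  stmt_10_general d N hN n hn c l hl K hK hKcomp hKint hind
end

section
/- Let K ⊆ ℝ^d be a nonempty compact convex set and let l₀, …, l_d be affine functions on ℝ^d such that for each i: l_i ≥ 0 on K and the hyperplane H_i = {l_i = 0} meets K. Suppose S := {x ∈ ℝ^d : l_i(x) ≥ 0 for all i = 0, …, d} is a d-dimensional simplex (so K ⊆ S). Then for every nonzero vector b ∈ ℝ^d, the translate b + K is not contained in S; that is, there exists y ∈ K with y + b ∉ S. -/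
open scoped RealInnerProductSpace

/-! Since `S` is a simplex it is bounded, so it contains no ray: for `b ≠ 0` some facet normal
satisfies `⟪n i, b⟫ < 0`. A point `y ∈ K` on the hyperplane `l i = 0` then has
`l i (y + b) = ⟪n i, b⟫ < 0`. -/

open Bornology

lemma eq_zero_of_isBounded_of_forall_add_smul_mem {E : Type*} [NormedAddCommGroup E]
    [NormedSpace ℝ E] {S : Set E} (hS : IsBounded S) {x b : E} (hx : x ∈ S)
    (hray : ∀ t : ℝ, 0 ≤ t → x + t • b ∈ S) : b = 0 := by
  obtain ⟨R, hR⟩ := (hS.sub hS).exists_norm_le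
  have hbound : ∀ t : ℝ, 0 ≤ t → t * ‖b‖ ≤ R := fun t ht => by
    have := hR _ (Set.sub_mem_sub (hray t ht) hx)
    rwa [add_sub_cancel_left, norm_smul, Real.norm_of_nonneg ht] at this
  by_contra hb
  have hbpos : 0 < ‖b‖ := norm_pos_iff.mpr hb
  have hR0 : 0 ≤ R := by simpa using hbound 0 le_rfl
  have := hbound ((R + 1) / ‖b‖) (by positivity)
  rw [div_mul_cancel₀ _ hbpos.ne'] at this
  linarith

lemma exists_inner_neg_of_isBounded_polyhedron {E ι : Type*} [NormedAddCommGroup E]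
    [InnerProductSpace ℝ E] {n : ι → E} {c : ι → ℝ}
    (hS : IsBounded {x | ∀ i, 0 ≤ ⟪n i, x⟫ + c i})
    (hne : {x | ∀ i, 0 ≤ ⟪n i, x⟫ + c i}.Nonempty) {b : E} (hb : b ≠ 0) :
    ∃ i, ⟪n i, b⟫ < 0 := by
  by_contra! h
  obtain ⟨x, hx⟩ := hne
  refine hb (eq_zero_of_isBounded_of_forall_add_smul_mem hS hx fun t ht i => ?_)
  rw [inner_add_right, inner_smul_right]
  nlinarith [hx i, h i]

theorem stmt_11_general (d : ℕ)
    (K : Set (EuclideanSpace ℝ (Fin d)))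
    (n : Fin (d + 1) → EuclideanSpace ℝ (Fin d))
    (c : Fin (d + 1) → ℝ)
    (l : Fin (d + 1) → EuclideanSpace ℝ (Fin d) → ℝ)
    (hl : ∀ i x, l i x = ⟪n i, x⟫ + c i)
    (hmeet : ∀ i, ∃ x ∈ K, l i x = 0)
    (hsimplex : ∃ p : Fin (d + 1) → EuclideanSpace ℝ (Fin d),
      AffineIndependent ℝ p ∧
      {x : EuclideanSpace ℝ (Fin d) | ∀ i, 0 ≤ l i x} = convexHull ℝ (Set.range p)) :
    ∀ b : EuclideanSpace ℝ (Fin d), b ≠ 0 →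
      ∃ y ∈ K, y + b ∉ {x : EuclideanSpace ℝ (Fin d) | ∀ i, 0 ≤ l i x} := by
  intro b hb
  obtain rfl : l = fun i x => ⟪n i, x⟫ + c i := funext₂ hl
  obtain ⟨p, -, hS⟩ := hsimplex
  have hbdd : IsBounded {x | ∀ i, 0 ≤ ⟪n i, x⟫ + c i} :=
    hS ▸ (Set.finite_range p).isCompact_convexHull (𝕜 := ℝ) |>.isBounded
  have hne : {x | ∀ i, 0 ≤ ⟪n i, x⟫ + c i}.Nonempty :=
    hS ▸ ⟨p 0, subset_convexHull ℝ _ (Set.mem_range_self 0)⟩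
  obtain ⟨i, hi⟩ := exists_inner_neg_of_isBounded_polyhedron hbdd hne hb
  obtain ⟨y, hyK, hy0⟩ := hmeet i
  refine ⟨y, hyK, fun hmem => ?_⟩
  have := hmem i
  simp only [inner_add_right] at hy0 this
  linarith

/-- Lemma 3.9: a supporting simplex `S ⊇ K` is minimal: no nonzero translate of
`K` stays inside `S`. -/
theorem stmt_11 (d : ℕ) (hd : 1 ≤ d)
    (K : Set (EuclideanSpace ℝ (Fin d)))
    (hKne : K.Nonempty) (hKcomp : IsCompact K) (hKconv : Convex ℝ K)
    (n : Fin (d + 1) → EuclideanSpace ℝ (Fin d)) (hn : ∀ i, n i ≠ 0)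
    (c : Fin (d + 1) → ℝ)
    (l : Fin (d + 1) → EuclideanSpace ℝ (Fin d) → ℝ)
    (hl : ∀ i x, l i x = ⟪n i, x⟫ + c i)
    (hKpos : ∀ i, ∀ x ∈ K, 0 ≤ l i x)
    (hmeet : ∀ i, ∃ x ∈ K, l i x = 0)
    (hsimplex : ∃ p : Fin (d + 1) → EuclideanSpace ℝ (Fin d),
      AffineIndependent ℝ p ∧
      {x : EuclideanSpace ℝ (Fin d) | ∀ i, 0 ≤ l i x} = convexHull ℝ (Set.range p)) :
    ∀ b : EuclideanSpace ℝ (Fin d), b ≠ 0 →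
      ∃ y ∈ K, y + b ∉ {x : EuclideanSpace ℝ (Fin d) | ∀ i, 0 ≤ l i x} :=
  stmt_11_general d K n c l hl hmeet hsimplex
end

section
/- Let K = {x ∈ ℝ^d : l_i(x) ≥ 0 for all i ∈ I} be a compact set with nonempty interior, where I is a finite index set and each l_i(x) = ⟨n_i, x⟩ + c_i is an affine function whose hyperplane H_i = {l_i = 0} meets K. Let E = {a₁ + (cos θ)·a₂ + (sin θ)·a₃ : θ ∈ ℝ} ⊆ K be an ellipse (a₁, a₂, a₃ ∈ ℝ^d) that is inscribed in K, i.e., for every v ∈ ℝ^d the translate v + E is not contained in the interior of K. Then there exists a subset A ⊆ I such that the set S := {x ∈ ℝ^d : l_i(x) ≥ 0 for all i ∈ A} contains K, S is either a d-dimensional simplex or a strip whose orthogonal cross-section is a simplex (i.e., S = {x : π_V(x) ∈ Σ} for some linear subspace V of dimension j, 1 ≤ j < d, with π_V the orthogonal projection onto V and Σ the convex hull of j+1 affinely independent points of V), and E is inscribed in S: for every v ∈ ℝ^d, the translate v + E is not contained in the interior of S. -/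
/-!
Every constraint either touches the ellipse (vanishes somewhere on it) or is positive on the whole
compact ellipse. If `0` were not in the convex hull of the touching normals, a vector `v` with
`⟪n i, v⟫ > 0` for every touching `i` would push a small translate of the ellipse into the
interior of `K`. By Carathéodory, `0` is then a positive combination of affinely independent
touching normals `w₀, …, wⱼ`. In the `j`-dimensional span of the `wₖ` these `j + 1` constraints cut
out a simplex, whose vertices are found by solving for prescribed inner products with the `wₖ`;
in `ℝ^d` they cut out that simplex (`j = d`) or the strip over it (`j < d`). The same positive
dependence `∑ μₖ wₖ = 0` keeps every translate of the ellipse by `v` out of the interior of the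
new polytope, since the touching points would force `⟪wₖ, v⟫ > 0` for every `k`.
-/

open scoped RealInnerProductSpace
open Module Set Filter Topology

section InnerProductSpace

variable {E : Type*} [NormedAddCommGroup E] [InnerProductSpace ℝ E]

theorem sum_mul_inner_eq_zero {κ : Type*} [Fintype κ] {w : κ → E} {μ : κ → ℝ}
    (hsum : ∑ k, μ k • w k = 0) (y : E) : ∑ k, μ k * ⟪w k, y⟫ = 0 := by
  simp_rw [← real_inner_smul_left, ← sum_inner, hsum, inner_zero_left]

theorem inner_add_pos_of_mem_interior {n : E} (hn : n ≠ 0) {c : ℝ} {s : Set E}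
    (hs : ∀ y ∈ s, 0 ≤ ⟪n, y⟫ + c) {x : E} (hx : x ∈ interior s) : 0 < ⟪n, x⟫ + c := by
  have hlim : Tendsto (fun t : ℝ => x - t • n) (𝓝[>] 0) (𝓝 x) := by
    have hcont : Continuous fun t : ℝ => x - t • n := by fun_prop
    simpa using (hcont.tendsto 0).mono_left nhdsWithin_le_nhds
  obtain ⟨t, ht, ht0⟩ :=
    ((hlim.eventually (mem_interior_iff_mem_nhds.1 hx)).and self_mem_nhdsWithin).exists
  replace ht := hs _ ht
  have hshift : 0 ≤ ⟪n, x⟫ + c - t * ‖n‖ ^ 2 := by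
    simpa [inner_sub_right, real_inner_smul_right, real_inner_self_eq_norm_sq,
      sub_add_eq_add_sub] using ht
  have : 0 < t * ‖n‖ ^ 2 := by have := norm_pos_iff.2 hn; positivity
  linarith

theorem isOpen_setOf_forall_inner_add_pos {κ : Type*} [Finite κ] (w : κ → E) (b : κ → ℝ) :
    IsOpen {x : E | ∀ k, 0 < ⟪w k, x⟫ + b k} := by
  simp only [ofPred_forall]
  exact isOpen_iInter_of_finite fun k => isOpen_lt continuous_const (by fun_prop)

theorem convex_setOf_forall_inner_add_nonneg_s16 {κ : Type*} (w : κ → E) (b : κ → ℝ) :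
    Convex ℝ {y : E | ∀ k, 0 ≤ ⟪w k, y⟫ + b k} := by
  simp only [ofPred_forall]
  refine convex_iInter fun k => ?_
  simpa [neg_le_iff_add_nonneg, add_comm] using
    convex_halfSpace_ge (innerₛₗ ℝ (w k)).isLinear (-b k)

theorem affineIndependent_of_inner_add_eq_ite {κ : Type*} [DecidableEq κ] {w q : κ → E}
    {b r : κ → ℝ} (hr : ∀ k, r k ≠ 0)
    (hq : ∀ m k, ⟪w m, q k⟫ + b m = if m = k then r k else 0) :
    AffineIndependent ℝ q := by
  rw [affineIndependent_iff]
  intro s a ha hsa m hm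
  have h := congrArg (⟪w m, ·⟫) hsa
  simp only [inner_sum, real_inner_smul_right, inner_zero_right] at h
  have hexp : ∀ k ∈ s, a k * ⟪w m, q k⟫ = a k * (if m = k then r k else 0) - a k * b m :=
    fun k _ => by rw [← hq]; ring
  rw [Finset.sum_congr rfl hexp, Finset.sum_sub_distrib, ← Finset.sum_mul, ha] at h
  simpa [hm, hr m] using h

theorem IsCompact.eventually_forall_smul_add_mem {K U : Set E} (hK : IsCompact K)
    (hU : IsOpen U) (hKU : K ⊆ U) (v : E) : ∀ᶠ ε in 𝓝 (0 : ℝ), ∀ e ∈ K, ε • v + e ∈ U := by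
  obtain ⟨V, hV, hVK⟩ := compact_open_separated_add_left hK hU hKU
  have hlim : Tendsto (fun ε : ℝ => ε • v) (𝓝 0) (𝓝 0) := by
    simpa using (tendsto_id (x := 𝓝 (0 : ℝ))).smul_const v
  filter_upwards [hlim hV] with ε hε e he using hVK (add_mem_add hε he)

theorem exists_forall_inner_pos_of_zero_notMem_convexHull [CompleteSpace E] {s : Set E}
    (hs : s.Finite) (h : (0 : E) ∉ convexHull ℝ s) : ∃ v : E, ∀ x ∈ s, 0 < ⟪x, v⟫ := by
  obtain ⟨f, u, hf0, hfs⟩ := geometric_hahn_banach_point_closed (convex_convexHull ℝ s)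
    (hs.isCompact_convexHull ℝ).isClosed h
  refine ⟨(InnerProductSpace.toDual ℝ E).symm f, fun x hx => ?_⟩
  rw [real_inner_comm, InnerProductSpace.toDual_symm_apply]
  have := hfs x (subset_convexHull ℝ s hx)
  rw [map_zero] at hf0
  linarith

theorem exists_fin_pos_convex_span_of_mem_convexHull {s : Set E} {x : E}
    (hx : x ∈ convexHull ℝ s) :
    ∃ (j : ℕ) (z : Fin (j + 1) → E) (μ : Fin (j + 1) → ℝ), range z ⊆ s ∧
      AffineIndependent ℝ z ∧ (∀ k, 0 < μ k) ∧ ∑ k, μ k = 1 ∧ ∑ k, μ k • z k = x := by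
  obtain ⟨κ, _, z, μ, hzs, hz, hμ, hμ1, hμz⟩ := eq_pos_convex_span_of_mem_convexHull hx
  have hcard : Fintype.card κ - 1 + 1 = Fintype.card κ := by
    refine Nat.sub_add_cancel (Fintype.card_pos_iff.2 ?_)
    by_contra hempty
    rw [not_nonempty_iff] at hempty
    simp at hμ1
  set e : Fin (Fintype.card κ - 1 + 1) ≃ κ := (finCongr hcard).trans (Fintype.equivFin κ).symm
  refine ⟨_, z ∘ e, μ ∘ e, by rwa [EquivLike.range_comp], hz.comp_embedding e.toEmbedding,
    fun k => hμ _, ?_, ?_⟩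
  · rwa [Function.comp_def, e.sum_comp μ]
  · simpa only [Function.comp_apply] using (e.sum_comp fun k => μ k • z k).trans hμz

theorem zero_mem_convexHull_of_forall_not_image_add_subset_interior [CompleteSpace E]
    {ι : Type*} [Finite ι] {n : ι → E} {c : ι → ℝ} {Ell : Set E} (hEll : IsCompact Ell)
    (hEllK : Ell ⊆ {x | ∀ i, 0 ≤ ⟪n i, x⟫ + c i})
    (hinsc : ∀ v : E,
      ¬ (fun e => v + e) '' Ell ⊆ interior {x | ∀ i, 0 ≤ ⟪n i, x⟫ + c i}) :
    (0 : E) ∈ convexHull ℝ (n '' {i | ∃ e ∈ Ell, ⟪n i, e⟫ + c i = 0}) := by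
  by_contra h0
  obtain ⟨v, hv⟩ := exists_forall_inner_pos_of_zero_notMem_convexHull (toFinite _) h0
  have hev : ∀ i, ∀ᶠ ε in 𝓝[>] (0 : ℝ), ∀ e ∈ Ell, 0 < ⟪n i, ε • v + e⟫ + c i := by
    intro i
    by_cases hi : ∃ e ∈ Ell, ⟪n i, e⟫ + c i = 0
    · filter_upwards [self_mem_nhdsWithin] with ε (hε : 0 < ε) e he
      have := mul_pos hε (hv (n i) ⟨i, hi, rfl⟩)
      rw [inner_add_right, real_inner_smul_right]
      linarith [hEllK he i]
    · push Not at hi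
      have hU : Ell ⊆ {x | 0 < ⟪n i, x⟫ + c i} := fun e he =>
        (hEllK he i).lt_of_ne' (hi e he)
      exact nhdsWithin_le_nhds (hEll.eventually_forall_smul_add_mem
        (isOpen_lt continuous_const (by fun_prop)) hU v)
  obtain ⟨ε, hε⟩ := (eventually_all.2 hev).exists
  refine hinsc (ε • v) (Subset.trans ?_ (interior_maximal (fun x hx i => (hx i).le)
    (isOpen_setOf_forall_inner_add_pos n c)))
  rintro _ ⟨e, he, rfl⟩ i
  exact hε i e he

theorem not_image_add_subset_interior_of_sum_smul_eq_zero {κ : Type*} [Fintype κ]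
    [Nonempty κ] {w : κ → E} {b μ : κ → ℝ} (hw : ∀ k, w k ≠ 0) (hμ : ∀ k, 0 < μ k)
    (hsum : ∑ k, μ k • w k = 0) {Ell : Set E} (htouch : ∀ k, ∃ e ∈ Ell, ⟪w k, e⟫ + b k = 0)
    (v : E) : ¬ (fun e => v + e) '' Ell ⊆ interior {x | ∀ k, 0 ≤ ⟪w k, x⟫ + b k} := by
  intro hv
  have hpos : ∀ k, 0 < μ k * ⟪w k, v⟫ := by
    intro k
    obtain ⟨e, he, hek⟩ := htouch k
    have := inner_add_pos_of_mem_interior (hw k)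
      (fun x (hx : ∀ k, 0 ≤ ⟪w k, x⟫ + b k) => hx k) (hv ⟨e, he, rfl⟩)
    rw [inner_add_right] at this
    exact mul_pos (hμ k) (by linarith)
  have := Finset.sum_pos (fun k _ => hpos k) Finset.univ_nonempty
  rw [sum_mul_inner_eq_zero hsum] at this
  exact this.false

end InnerProductSpace

section Simplex

variable {W : Type*} [NormedAddCommGroup W] [InnerProductSpace ℝ W] [FiniteDimensional ℝ W]
  {κ : Type*} [Fintype κ] {w : κ → W}

theorem AffineIndependent.injective_pi_innerₛₗ (hw : AffineIndependent ℝ w)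
    (hcard : Fintype.card κ = finrank ℝ W + 1) :
    Function.Injective (LinearMap.pi fun k => innerₛₗ ℝ (w k)) := by
  rw [← LinearMap.ker_eq_bot, Submodule.eq_bot_iff]
  intro y hy
  have hy : ∀ k, ⟪w k, y⟫ = 0 := fun k => congrFun (LinearMap.mem_ker.1 hy) k
  have hspan : vectorSpan ℝ (range w) ≤ (ℝ ∙ y)ᗮ := by
    rw [vectorSpan_def, Submodule.span_le]
    rintro _ ⟨_, ⟨k, rfl⟩, _, ⟨m, rfl⟩, rfl⟩
    simp [Submodule.mem_orthogonal_singleton_iff_inner_left, inner_sub_left, hy]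
  rw [AffineSubspace.vectorSpan_eq_top_of_affineSpan_eq_top ℝ W W
    (hw.affineSpan_eq_top_iff_card_eq_finrank_add_one.2 hcard), top_le_iff] at hspan
  have hyy : y ∈ (ℝ ∙ y)ᗮ := hspan ▸ Submodule.mem_top
  exact inner_self_eq_zero.1 (Submodule.mem_orthogonal_singleton_iff_inner_left.1 hyy)

/-- The image of `y ↦ (⟪w k, y⟫)ₖ` is the hyperplane `∑ μ k * t k = 0`: it lies in it and has the
same dimension. -/
theorem AffineIndependent.exists_forall_inner_eq (hw : AffineIndependent ℝ w)
    (hcard : Fintype.card κ = finrank ℝ W + 1) {μ : κ → ℝ} (hμ : μ ≠ 0)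
    (hsum : ∑ k, μ k • w k = 0) {t : κ → ℝ} (ht : ∑ k, μ k * t k = 0) :
    ∃ y : W, ∀ k, ⟪w k, y⟫ = t k := by
  classical
  set L : W →ₗ[ℝ] κ → ℝ := LinearMap.pi fun k => innerₛₗ ℝ (w k)
  set f : (κ → ℝ) →ₗ[ℝ] ℝ := ∑ k, μ k • LinearMap.proj k
  have hf : ∀ s, f s = ∑ k, μ k * s k := fun s => by simp [f]
  have hf0 : f ≠ 0 := by
    obtain ⟨k, hk⟩ := Function.ne_iff.1 hμ
    exact fun h => hk (by
      simpa [hf, Pi.single_apply] using LinearMap.congr_fun h (Pi.single k 1))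
  have hle : LinearMap.range L ≤ LinearMap.ker f := by
    rintro _ ⟨y, rfl⟩
    simpa [hf, L] using sum_mul_inner_eq_zero hsum y
  have hrange : LinearMap.range L = LinearMap.ker f := by
    refine Submodule.eq_of_le_of_finrank_eq hle ?_
    have := f.finrank_range_add_finrank_ker
    rw [LinearMap.range_eq_top.2 (f.surjective_of_ne_zero hf0)] at this
    simp only [finrank_top, finrank_self, Module.finrank_fintype_fun_eq_card] at this
    rw [LinearMap.finrank_range_of_inj (hw.injective_pi_innerₛₗ hcard)]
    omega
  obtain ⟨y, hy⟩ : t ∈ LinearMap.range L := hrange ▸ by simpa [hf] using ht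
  exact ⟨y, fun k => congrFun hy k⟩

theorem AffineIndependent.exists_convexHull_eq_setOf_inner_add_nonneg
    (hw : AffineIndependent ℝ w) (hcard : Fintype.card κ = finrank ℝ W + 1) {μ : κ → ℝ}
    (hμ : ∀ k, 0 < μ k) (hsum : ∑ k, μ k • w k = 0) {b : κ → ℝ} {x₀ : W}
    (hx₀ : ∀ k, 0 < ⟪w k, x₀⟫ + b k) :
    ∃ q : κ → W, AffineIndependent ℝ q ∧
      {y : W | ∀ k, 0 ≤ ⟪w k, y⟫ + b k} = convexHull ℝ (range q) := by
  classical
  have hweighted : ∀ y, ∑ k, μ k * (⟪w k, y⟫ + b k) = ∑ k, μ k * b k := fun y => by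
    simp only [mul_add, Finset.sum_add_distrib, sum_mul_inner_eq_zero hsum, zero_add]
  set β := ∑ k, μ k * b k
  have hβ : 0 < β := by
    rw [← hweighted x₀]
    have : Nonempty κ := Fintype.card_pos_iff.1 (by omega)
    exact Finset.sum_pos (fun k _ => mul_pos (hμ k) (hx₀ k)) Finset.univ_nonempty
  -- vertex `k` is the point where every constraint except the `k`-th one is tight
  have hvertex : ∀ k, ∃ y : W, ∀ m, ⟪w m, y⟫ = (if m = k then β / μ k else 0) - b m := by
    intro k
    refine hw.exists_forall_inner_eq hcard (fun h => (hμ k).ne' (congrFun h k)) hsum ?_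
    simp [mul_sub, Finset.sum_sub_distrib, mul_div_cancel₀ _ (hμ k).ne', β]
  choose q hq using hvertex
  have hq' : ∀ m k, ⟪w m, q k⟫ + b m = if m = k then β / μ k else 0 := fun m k => by
    rw [hq]; ring
  refine ⟨q, affineIndependent_of_inner_add_eq_ite (fun k => (div_pos hβ (hμ k)).ne') hq', ?_⟩
  refine Subset.antisymm (fun y hy => ?_)
    (convexHull_min ?_ (convex_setOf_forall_inner_add_nonneg_s16 w b))
  · set ν : κ → ℝ := fun k => μ k * (⟪w k, y⟫ + b k) / β
    have hν1 : ∑ k, ν k = 1 := by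
      simp only [ν, ← Finset.sum_div, hweighted, div_self hβ.ne']
    have hyν : y = ∑ k, ν k • q k := by
      refine hw.injective_pi_innerₛₗ hcard (funext fun m => ?_)
      change ⟪w m, y⟫ = ⟪w m, ∑ k, ν k • q k⟫
      simp only [inner_sum, real_inner_smul_right, hq, mul_sub, mul_ite, mul_zero,
        Finset.sum_sub_distrib, Finset.sum_ite_eq, Finset.mem_univ, if_true, ← Finset.sum_mul,
        hν1]
      have := (hμ m).ne'
      simp only [ν]
      field_simp
      ring
    rw [hyν]
    exact (convex_convexHull ℝ _).sum_mem (fun k _ => div_nonneg (mul_nonneg (hμ k).le (hy k))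
      hβ.le) hν1 fun k _ => subset_convexHull ℝ _ (mem_range_self k)
  · rintro _ ⟨k, rfl⟩ m
    rw [hq']
    split_ifs
    exacts [(div_pos hβ (hμ k)).le, le_rfl]

end Simplex

theorem exists_simplex_or_strip_eq_setOf_inner_add_nonneg {E : Type*} [NormedAddCommGroup E]
    [InnerProductSpace ℝ E] [FiniteDimensional ℝ E] {d j : ℕ} (hE : finrank ℝ E = d)
    {w : Fin (j + 1) → E} (hw : AffineIndependent ℝ w) (hw0 : ∀ k, w k ≠ 0)
    {μ : Fin (j + 1) → ℝ} (hμ : ∀ k, 0 < μ k) (hμ1 : ∑ k, μ k = 1) (hsum : ∑ k, μ k • w k = 0)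
    {b : Fin (j + 1) → ℝ} {x₀ : E} (hx₀ : ∀ k, 0 < ⟪w k, x₀⟫ + b k) :
    (∃ p : Fin (d + 1) → E, AffineIndependent ℝ p ∧
        {x | ∀ k, 0 ≤ ⟪w k, x⟫ + b k} = convexHull ℝ (range p)) ∨
      ∃ (i : ℕ) (_ : 1 ≤ i) (_ : i < d) (V : Submodule ℝ E) (q : Fin (i + 1) → V),
        finrank ℝ V = i ∧ AffineIndependent ℝ q ∧
        {x | ∀ k, 0 ≤ ⟪w k, x⟫ + b k} =
          {x | V.orthogonalProjectionOnto x ∈ convexHull ℝ (range q)} := by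
  have hV : finrank ℝ (vectorSpan ℝ (range w)) = j := hw.finrank_vectorSpan (by simp)
  have hjd : j ≤ d := hE ▸ hV ▸ Submodule.finrank_le _
  rcases hjd.eq_or_lt with rfl | hjd
  · exact .inl (hw.exists_convexHull_eq_setOf_inner_add_nonneg (by simp [hE]) hμ hsum hx₀)
  right
  set V := vectorSpan ℝ (range w)
  have h0 : (0 : E) ∈ affineSpan ℝ (range w) := by
    rw [← hsum, ← Finset.univ.affineCombination_eq_linear_combination w μ hμ1]
    exact affineCombination_mem_affineSpan hμ1 w
  have hwV : ∀ k, w k ∈ V := fun k => by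
    simpa using vsub_mem_vectorSpan_of_mem_affineSpan_of_mem_affineSpan
      (mem_affineSpan ℝ (mem_range_self k)) h0
  set w' : Fin (j + 1) → V := fun k => ⟨w k, hwV k⟩
  have hj : 1 ≤ j := Nat.one_le_iff_ne_zero.2 <| by
    rintro rfl
    simp [(hμ 0).ne', hw0] at hsum
  have hw' : AffineIndependent ℝ w' := AffineIndependent.of_comp V.subtype.toAffineMap hw
  have hsum' : ∑ k, μ k • w' k = 0 := Subtype.ext (by simpa [w'] using hsum)
  obtain ⟨q, hq, hSq⟩ := hw'.exists_convexHull_eq_setOf_inner_add_nonneg (by simp [hV]) hμ hsum'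
    (x₀ := V.orthogonalProjectionOnto x₀) (by simpa [w'] using hx₀)
  refine ⟨j, hj, hjd, V, q, hV, hq, ?_⟩
  rw [← hSq]
  ext x
  simp only [mem_ofPred_eq, Submodule.inner_orthogonalProjectionOnto_eq_of_mem_left, w']

theorem stmt_16_general (d : ℕ)
    (ι : Type) [Fintype ι]
    (n : ι → EuclideanSpace ℝ (Fin d)) (hn : ∀ i, n i ≠ 0)
    (c : ι → ℝ)
    (l : ι → EuclideanSpace ℝ (Fin d) → ℝ)
    (hl : ∀ i x, l i x = ⟪n i, x⟫ + c i)
    (K : Set (EuclideanSpace ℝ (Fin d)))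
    (hK : K = {x : EuclideanSpace ℝ (Fin d) | ∀ i, 0 ≤ l i x})
    (hKint : (interior K).Nonempty)
    (a₁ a₂ a₃ : EuclideanSpace ℝ (Fin d))
    (Ell : Set (EuclideanSpace ℝ (Fin d)))
    (hEll : Ell = Set.range (fun θ : ℝ => a₁ + Real.cos θ • a₂ + Real.sin θ • a₃))
    (hEllK : Ell ⊆ K)
    (hinsc : ∀ v : EuclideanSpace ℝ (Fin d),
      ¬ ((fun e => v + e) '' Ell ⊆ interior K)) :
    ∃ A : Finset ι,
      K ⊆ {x : EuclideanSpace ℝ (Fin d) | ∀ i ∈ A, 0 ≤ l i x} ∧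
      ((∃ p : Fin (d + 1) → EuclideanSpace ℝ (Fin d),
          AffineIndependent ℝ p ∧
          {x : EuclideanSpace ℝ (Fin d) | ∀ i ∈ A, 0 ≤ l i x} =
            convexHull ℝ (Set.range p)) ∨
        (∃ (j : ℕ) (_ : 1 ≤ j) (_ : j < d)
            (V : Submodule ℝ (EuclideanSpace ℝ (Fin d)))
            (q : Fin (j + 1) → V),
          Module.finrank ℝ V = j ∧
          AffineIndependent ℝ q ∧
          {x : EuclideanSpace ℝ (Fin d) | ∀ i ∈ A, 0 ≤ l i x} =
            {x : EuclideanSpace ℝ (Fin d) |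
              Submodule.orthogonalProjectionOnto V x ∈ convexHull ℝ (Set.range q)})) ∧
      (∀ v : EuclideanSpace ℝ (Fin d),
        ¬ ((fun e => v + e) '' Ell ⊆
          interior {x : EuclideanSpace ℝ (Fin d) | ∀ i ∈ A, 0 ≤ l i x})) := by
  classical
  obtain rfl : l = fun i x => ⟪n i, x⟫ + c i := funext₂ hl
  subst hK
  beta_reduce at hKint hEllK hinsc ⊢
  have hEllc : IsCompact Ell := hEll ▸ Function.Periodic.compact_of_continuous
    (c := 2 * Real.pi) (fun θ => by simp) Real.two_pi_pos.ne' (by fun_prop)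
  obtain ⟨j, z, μ, hzT, hz, hμ, hμ1, hμz⟩ := exists_fin_pos_convex_span_of_mem_convexHull
    (zero_mem_convexHull_of_forall_not_image_add_subset_interior hEllc hEllK hinsc)
  choose g hgT hgz using fun k => hzT (mem_range_self k)
  have hz0 : ∀ k, z k ≠ 0 := fun k => hgz k ▸ hn (g k)
  have hA : {x | ∀ i ∈ Finset.univ.image g, 0 ≤ ⟪n i, x⟫ + c i} =
      {x | ∀ k, 0 ≤ ⟪z k, x⟫ + c (g k)} := by
    ext x
    simp [← hgz]
  obtain ⟨x₀, hx₀⟩ := hKint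
  have hx₀z : ∀ k, 0 < ⟪z k, x₀⟫ + c (g k) := fun k => hgz k ▸ inner_add_pos_of_mem_interior
    (hn (g k)) (fun x (hx : ∀ i, 0 ≤ ⟪n i, x⟫ + c i) => hx (g k)) hx₀
  refine ⟨Finset.univ.image g, fun x hx i _ => hx i, ?_, ?_⟩
  · rw [hA]
    exact exists_simplex_or_strip_eq_setOf_inner_add_nonneg finrank_euclideanSpace_fin hz hz0 hμ
      hμ1 hμz hx₀z
  · rw [hA]
    exact not_image_add_subset_interior_of_sum_smul_eq_zero hz0 hμ hμz fun k => hgz k ▸ hgT k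

/-- Proposition 5.2: an ellipse inscribed in a compact convex polytope `K` is
inscribed in some supporting simplex or strip of `K`. -/
theorem stmt_16 (d : ℕ) (hd : 1 ≤ d)
    (ι : Type) [Fintype ι]
    (n : ι → EuclideanSpace ℝ (Fin d)) (hn : ∀ i, n i ≠ 0)
    (c : ι → ℝ)
    (l : ι → EuclideanSpace ℝ (Fin d) → ℝ)
    (hl : ∀ i x, l i x = ⟪n i, x⟫ + c i)
    (K : Set (EuclideanSpace ℝ (Fin d)))
    (hK : K = {x : EuclideanSpace ℝ (Fin d) | ∀ i, 0 ≤ l i x})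
    (hKcomp : IsCompact K) (hKint : (interior K).Nonempty)
    (hmeet : ∀ i, ∃ x ∈ K, l i x = 0)
    (a₁ a₂ a₃ : EuclideanSpace ℝ (Fin d))
    (Ell : Set (EuclideanSpace ℝ (Fin d)))
    (hEll : Ell = Set.range (fun θ : ℝ => a₁ + Real.cos θ • a₂ + Real.sin θ • a₃))
    (hEllK : Ell ⊆ K)
    (hinsc : ∀ v : EuclideanSpace ℝ (Fin d),
      ¬ ((fun e => v + e) '' Ell ⊆ interior K)) :
    ∃ A : Finset ι,
      K ⊆ {x : EuclideanSpace ℝ (Fin d) | ∀ i ∈ A, 0 ≤ l i x} ∧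
      ((∃ p : Fin (d + 1) → EuclideanSpace ℝ (Fin d),
          AffineIndependent ℝ p ∧
          {x : EuclideanSpace ℝ (Fin d) | ∀ i ∈ A, 0 ≤ l i x} =
            convexHull ℝ (Set.range p)) ∨
        (∃ (j : ℕ) (_ : 1 ≤ j) (_ : j < d)
            (V : Submodule ℝ (EuclideanSpace ℝ (Fin d)))
            (q : Fin (j + 1) → V),
          Module.finrank ℝ V = j ∧
          AffineIndependent ℝ q ∧
          {x : EuclideanSpace ℝ (Fin d) | ∀ i ∈ A, 0 ≤ l i x} =
            {x : EuclideanSpace ℝ (Fin d) |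
              Submodule.orthogonalProjectionOnto V x ∈ convexHull ℝ (Set.range q)})) ∧
      (∀ v : EuclideanSpace ℝ (Fin d),
        ¬ ((fun e => v + e) '' Ell ⊆
          interior {x : EuclideanSpace ℝ (Fin d) | ∀ i ∈ A, 0 ≤ l i x})) :=
  stmt_16_general d ι n hn c l hl K hK hKint a₁ a₂ a₃ Ell hEll hEllK hinsc
end
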